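/- Suppose q and q̄ are continuous real-valued functions on [0, ε₁] satisfying q(z)² = -2∫₀¹ t q(zt) dt + 2 - 2z + z²/2, and there are M₁ > 0, ε₁ > 0 with M₁ε₁ < 2/3 such that |q(z) - 1| ≤ M₁ z and |q̄(z) - 1| ≤ M₁ z on [0, ε₁]. Then q = q̄ on [0, ε₁]. -/

import Mathlib

/-!
Subtracting the equations for `q` and `q̄` gives
`(q z + q̄ z) (q z - q̄ z) = -2 ∫₀¹ t (q - q̄)(z t) dt`.
If `|q - q̄| ≤ C z` on `[0, ε₁]`, the integral is at most `C z / 3`, while `q z + q̄ z ≥ 2 (1 - M₁ ε₁)`;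
hence `|q - q̄| ≤ ρ C z` with `ρ = 1 / (3 (1 - M₁ ε₁)) < 1` exactly because `M₁ ε₁ < 2/3`.
Iterating from `C = 2 M₁` forces `q = q̄`.
-/

open Set intervalIntegral MeasureTheory Filter Topology

lemma mul_mem_Icc_of_mem_unitInterval {ε z t : ℝ} (hz : z ∈ Icc 0 ε) (ht : t ∈ Icc (0 : ℝ) 1) :
    z * t ∈ Icc 0 ε :=
  ⟨mul_nonneg hz.1 ht.1, (mul_le_of_le_one_right hz.1 ht.2).trans hz.2⟩

lemma intervalIntegrable_mul_comp_mul {f : ℝ → ℝ} {ε z : ℝ} (hf : ContinuousOn f (Icc 0 ε))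
    (hz : z ∈ Icc 0 ε) : IntervalIntegrable (fun t => t * f (z * t)) volume 0 1 := by
  refine ContinuousOn.intervalIntegrable ?_
  rw [uIcc_of_le zero_le_one]
  exact continuousOn_id.mul <| hf.comp (continuousOn_const.mul continuousOn_id)
    fun t ht => mul_mem_Icc_of_mem_unitInterval hz ht

lemma abs_integral_mul_comp_mul_le {g : ℝ → ℝ} {ε z C : ℝ} (hz : z ∈ Icc 0 ε)
    (hC : ∀ x ∈ Icc 0 ε, |g x| ≤ C * x) :
    |∫ t in (0 : ℝ)..1, t * g (z * t)| ≤ C * z / 3 := by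
  calc |∫ t in (0 : ℝ)..1, t * g (z * t)| ≤ ∫ t in (0 : ℝ)..1, C * z * t ^ 2 := by
        rw [← Real.norm_eq_abs]
        refine norm_integral_le_of_norm_le zero_le_one (Eventually.of_forall fun t ht => ?_)
          (Continuous.intervalIntegrable (by fun_prop) 0 1)
        have ht' : t ∈ Icc (0 : ℝ) 1 := Ioc_subset_Icc_self ht
        rw [Real.norm_eq_abs, abs_mul, abs_of_nonneg ht'.1]
        have := mul_le_mul_of_nonneg_left (hC _ (mul_mem_Icc_of_mem_unitInterval hz ht')) ht'.1
        linarith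
    _ = C * z / 3 := by
        rw [intervalIntegral.integral_const_mul, integral_pow]
        ring

lemma sq_sub_sq_eq_neg_two_mul_integral {q p : ℝ → ℝ} {ε : ℝ}
    (hqc : ContinuousOn q (Icc 0 ε)) (hpc : ContinuousOn p (Icc 0 ε))
    (hq : ∀ z ∈ Icc (0 : ℝ) ε,
      (q z) ^ 2 = -2 * (∫ t in (0 : ℝ)..1, t * q (z * t)) + 2 - 2 * z + z ^ 2 / 2)
    (hp : ∀ z ∈ Icc (0 : ℝ) ε,
      (p z) ^ 2 = -2 * (∫ t in (0 : ℝ)..1, t * p (z * t)) + 2 - 2 * z + z ^ 2 / 2) :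
    ∀ z ∈ Icc (0 : ℝ) ε,
      q z ^ 2 - p z ^ 2 = -2 * ∫ t in (0 : ℝ)..1, t * (q (z * t) - p (z * t)) := by
  intro z hz
  simp only [mul_sub]
  rw [integral_sub (intervalIntegrable_mul_comp_mul hqc hz) (intervalIntegrable_mul_comp_mul hpc hz),
    hq z hz, hp z hz]
  ring

lemma abs_sub_le_contraction {q p : ℝ → ℝ} {ε M C : ℝ} (hM : 0 ≤ M) (hMε : M * ε < 1)
    (hdiff : ∀ z ∈ Icc (0 : ℝ) ε,
      q z ^ 2 - p z ^ 2 = -2 * ∫ t in (0 : ℝ)..1, t * (q (z * t) - p (z * t)))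
    (hq1 : ∀ z ∈ Icc (0 : ℝ) ε, |q z - 1| ≤ M * z) (hp1 : ∀ z ∈ Icc (0 : ℝ) ε, |p z - 1| ≤ M * z)
    (hC : ∀ z ∈ Icc (0 : ℝ) ε, |q z - p z| ≤ C * z) :
    ∀ z ∈ Icc (0 : ℝ) ε, |q z - p z| ≤ (3 * (1 - M * ε))⁻¹ * C * z := by
  intro z hz
  have hsum : 2 * (1 - M * ε) ≤ q z + p z := by
    have := mul_le_mul_of_nonneg_left hz.2 hM
    linarith [(abs_le.mp (hq1 z hz)).1, (abs_le.mp (hp1 z hz)).1]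
  have hprod : |q z - p z| * (q z + p z) ≤ 2 * (C * z / 3) := by
    have hint := abs_integral_mul_comp_mul_le (g := fun x => q x - p x) hz hC
    rw [← abs_of_pos (show 0 < q z + p z by linarith), ← abs_mul,
      show (q z - p z) * (q z + p z) = q z ^ 2 - p z ^ 2 by ring, hdiff z hz, abs_mul, abs_neg, abs_two]
    linarith
  rw [mul_assoc, le_inv_mul_iff₀ (by linarith)]
  nlinarith [abs_nonneg (q z - p z)]

lemma eq_zero_of_abs_le_of_contraction {g : ℝ → ℝ} {s : Set ℝ} {ρ C₀ : ℝ} (hρ₀ : 0 ≤ ρ)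
    (hρ₁ : ρ < 1) (h₀ : ∀ z ∈ s, |g z| ≤ C₀ * z)
    (hstep : ∀ C, (∀ z ∈ s, |g z| ≤ C * z) → ∀ z ∈ s, |g z| ≤ ρ * C * z) :
    ∀ z ∈ s, g z = 0 := by
  have hiter : ∀ n : ℕ, ∀ z ∈ s, |g z| ≤ ρ ^ n * C₀ * z := by
    intro n
    induction n with
    | zero => simpa using h₀
    | succ n ih => simpa [pow_succ', mul_assoc] using hstep _ ih
  intro z hz
  have hlim : Tendsto (fun n : ℕ => ρ ^ n * C₀ * z) atTop (𝓝 0) := by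
    simpa using ((tendsto_pow_atTop_nhds_zero_of_lt_one hρ₀ hρ₁).mul_const C₀).mul_const z
  exact abs_nonpos_iff.mp (ge_of_tendsto' hlim fun n => hiter n z hz)

theorem stmt_2_general (ε₁ M₁ : ℝ) (hM₁ : 0 < M₁) (hMε : M₁ * ε₁ < 2 / 3)
    (q qbar : ℝ → ℝ)
    (hqc : ContinuousOn q (Icc 0 ε₁)) (hqbc : ContinuousOn qbar (Icc 0 ε₁))
    (hq : ∀ z ∈ Icc (0 : ℝ) ε₁,
      (q z) ^ 2 = -2 * (∫ t in (0 : ℝ)..1, t * q (z * t)) + 2 - 2 * z + z ^ 2 / 2)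
    (hqb : ∀ z ∈ Icc (0 : ℝ) ε₁,
      (qbar z) ^ 2 = -2 * (∫ t in (0 : ℝ)..1, t * qbar (z * t)) + 2 - 2 * z + z ^ 2 / 2)
    (hq1 : ∀ z ∈ Icc (0 : ℝ) ε₁, |q z - 1| ≤ M₁ * z)
    (hqb1 : ∀ z ∈ Icc (0 : ℝ) ε₁, |qbar z - 1| ≤ M₁ * z) :
    EqOn q qbar (Icc (0 : ℝ) ε₁) := by
  have hdiff := sq_sub_sq_eq_neg_two_mul_integral hqc hqbc hq hqb
  have hinit : ∀ z ∈ Icc (0 : ℝ) ε₁, |q z - qbar z| ≤ 2 * M₁ * z := fun z hz => by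
    linarith [abs_sub_le (q z) 1 (qbar z), abs_sub_comm 1 (qbar z), hq1 z hz, hqb1 z hz]
  intro z hz
  exact sub_eq_zero.mp (eq_zero_of_abs_le_of_contraction (g := fun z => q z - qbar z)
    (inv_nonneg.mpr (by linarith))
    (inv_lt_one_of_one_lt₀ (by linarith)) hinit
    (fun C hC => abs_sub_le_contraction hM₁.le (by linarith) hdiff hq1 hqb1 hC) z hz)

theorem stmt_2 (ε₁ M₁ : ℝ) (hM₁ : 0 < M₁) (hε₁ : 0 < ε₁) (hMε : M₁ * ε₁ < 2 / 3)
    (q qbar : ℝ → ℝ)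
    (hqc : ContinuousOn q (Icc 0 ε₁)) (hqbc : ContinuousOn qbar (Icc 0 ε₁))
    (hq : ∀ z ∈ Icc (0 : ℝ) ε₁,
      (q z) ^ 2 = -2 * (∫ t in (0 : ℝ)..1, t * q (z * t)) + 2 - 2 * z + z ^ 2 / 2)
    (hqb : ∀ z ∈ Icc (0 : ℝ) ε₁,
      (qbar z) ^ 2 = -2 * (∫ t in (0 : ℝ)..1, t * qbar (z * t)) + 2 - 2 * z + z ^ 2 / 2)
    (hq1 : ∀ z ∈ Icc (0 : ℝ) ε₁, |q z - 1| ≤ M₁ * z)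
    (hqb1 : ∀ z ∈ Icc (0 : ℝ) ε₁, |qbar z - 1| ≤ M₁ * z) :
    EqOn q qbar (Icc (0 : ℝ) ε₁) :=
  stmt_2_general ε₁ M₁ hM₁ hMε q qbar hqc hqbc hq hqb hq1 hqb1
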